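/- arXiv:math/0211127 — 2 statements merged into one kernel-verified Lean document; each statement's English description precedes it below -/
import Mathlib

section
/- (Mednykh) For a finite group G and a closed orientable surface S of genus g, the number of 2g-tuples (a₁,b₁,…,a_g,b_g) in G satisfying a₁b₁a₁⁻¹b₁⁻¹ ⋯ a_g b_g a_g⁻¹ b_g⁻¹ = 1 equals |G|^(2g-1) times the sum over irreducible complex representations λ of G of (dim λ)^(2-2g). -/
open CategoryTheory

section MednykhAux

variable {G : Type} [Group G] [Fintype G]

open FDRep

open scoped Classical in
lemma mednykh_charOrtho (V W : FDRep ℂ G) [Simple V] [Simple W] :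
    ∑ g : G, V.character g * W.character g⁻¹ =
      if Nonempty (V ≅ W) then (Fintype.card G : ℂ) else 0 := by
  letI : Invertible ((Nat.card G : ℂ)) :=
    invertibleOfNonzero (Nat.cast_ne_zero.mpr Nat.card_pos.ne')
  have h := char_orthonormal V W
  have hc : (Nat.card G : ℂ) ≠ 0 := Nat.cast_ne_zero.mpr Nat.card_pos.ne'
  have h2 := congrArg (fun x => (Nat.card G : ℂ) * x) h
  simp only [smul_eq_mul, ← mul_assoc, mul_inv_cancel₀ hc,
    one_mul, mul_ite, mul_one, mul_zero, Nat.cast_one, Nat.cast_zero] at h2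
  rw [Nat.card_eq_fintype_card] at h2
  exact h2

omit [Fintype G] in
lemma mednykh_nontrivial_of_simple (V : FDRep ℂ G) [Simple V] : Nontrivial V := by
  by_contra h
  have hs : Subsingleton V := not_nontrivial_iff_subsingleton.mp h
  refine id_nonzero V ?_
  ext v
  exact @Subsingleton.elim _ hs _ _

omit [Fintype G] in
lemma mednykh_finrank_ne_zero (V : FDRep ℂ G) [Simple V] :
    ((Module.finrank ℂ V : ℂ)) ≠ 0 := by
  haveI := mednykh_nontrivial_of_simple V
  exact Nat.cast_ne_zero.mpr (Module.finrank_pos).ne'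

omit [Fintype G] in
/-- Schur's lemma: an equivariant endomorphism of a simple representation is a scalar. -/
lemma mednykh_schur_scalar (V : FDRep ℂ G) [Simple V] (T : V →ₗ[ℂ] V)
    (hT : ∀ g : G, T * V.ρ g = V.ρ g * T) :
    T = ((LinearMap.trace ℂ V T) / (Module.finrank ℂ V : ℂ)) • LinearMap.id := by
  haveI := mednykh_nontrivial_of_simple V
  let f : V ⟶ V := ⟨FGModuleCat.ofHom T, fun g => by ext v; exact LinearMap.congr_fun (hT g) v⟩
  obtain ⟨c, hc⟩ := endomorphism_simple_eq_smul_id ℂ f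
  have hT' : T = c • LinearMap.id := by
    ext v
    have := congrArg (fun (φ : V ⟶ V) => φ.hom.hom.hom v) hc
    exact this.symm
  have htr : LinearMap.trace ℂ V T = c * (Module.finrank ℂ V : ℂ) := by
    rw [hT']; simp
  rw [htr, hT', mul_div_assoc, div_self (mednykh_finrank_ne_zero V), mul_one]

lemma mednykh_sum_conj (V : FDRep ℂ G) [Simple V] (b : G) :
    ∑ a : G, V.ρ (a * b * a⁻¹)
      = (((Fintype.card G : ℂ) * V.character b) / (Module.finrank ℂ V : ℂ))
          • LinearMap.id := by
  have h := mednykh_schur_scalar V (∑ a : G, V.ρ (a * b * a⁻¹)) (fun g => by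
    rw [Finset.sum_mul, Finset.mul_sum]
    refine Fintype.sum_bijective (fun a => g⁻¹ * a) (Group.mulLeft_bijective g⁻¹) _ _ fun a => ?_
    rw [← map_mul, ← map_mul]
    congr 1
    group)
  rw [h]
  congr 2
  rw [map_sum]
  have hs : ∑ x : G, LinearMap.trace ℂ V (V.ρ (x * b * x⁻¹)) = ∑ _x : G, V.character b :=
    Finset.sum_congr rfl fun a _ => V.char_conj b a
  rw [hs, Finset.sum_const, Finset.card_univ, nsmul_eq_mul]

lemma mednykh_conv_op (V : FDRep ℂ G) [Simple V] :
    ∑ b : G, V.character b • V.ρ b⁻¹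
      = ((Fintype.card G : ℂ) / (Module.finrank ℂ V : ℂ)) • LinearMap.id := by
  have h := mednykh_schur_scalar V (∑ b : G, V.character b • V.ρ b⁻¹) (fun g => by
    rw [Finset.sum_mul, Finset.mul_sum]
    refine Fintype.sum_bijective (fun b => g⁻¹ * b * g)
      ((Equiv.mulRight g).bijective.comp (Group.mulLeft_bijective g⁻¹)) _ _ fun b => ?_
    rw [smul_mul_assoc, mul_smul_comm, ← map_mul, ← map_mul]
    have hc : V.character (g⁻¹ * b * g) = V.character b := by
      have := V.char_conj b g⁻¹
      simpa using this
    rw [hc]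
    congr 2
    group)
  rw [h]
  congr 2
  rw [map_sum]
  have : ∀ b : G, LinearMap.trace ℂ V (V.character b • V.ρ b⁻¹)
      = V.character b * V.character b⁻¹ := fun b => by
    rw [map_smul]; rfl
  rw [Finset.sum_congr rfl fun b _ => this b, mednykh_charOrtho V V, if_pos ⟨Iso.refl V⟩]

lemma mednykh_comm_sum (V : FDRep ℂ G) [Simple V] :
    ∑ x : G × G, V.ρ (x.1 * x.2 * x.1⁻¹ * x.2⁻¹)
      = ((((Fintype.card G : ℂ) / (Module.finrank ℂ V : ℂ)) ^ 2) • LinearMap.id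
          : V →ₗ[ℂ] V) := by
  rw [Fintype.sum_prod_type_right]
  have step : ∀ b : G, ∑ a : G, V.ρ (a * b * a⁻¹ * b⁻¹)
      = (((Fintype.card G : ℂ) / (Module.finrank ℂ V : ℂ))) • (V.character b • V.ρ b⁻¹) := by
    intro b
    have : ∀ a : G, V.ρ (a * b * a⁻¹ * b⁻¹) = V.ρ (a * b * a⁻¹) * V.ρ b⁻¹ := fun a => by
      rw [← map_mul]
    rw [Finset.sum_congr rfl fun a _ => this a, ← Finset.sum_mul, mednykh_sum_conj V b,
      smul_mul_assoc, ← Module.End.one_eq_id, one_mul, smul_smul]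
    congr 1
    field_simp
  rw [Finset.sum_congr rfl fun b _ => step b, ← Finset.smul_sum, mednykh_conv_op V,
    smul_smul, sq]

omit [Fintype G] in
/-- Summing a representation over all words of commutators. -/
lemma mednykh_sum_word [Fintype G] (V : FDRep ℂ G) (m : ℕ) :
    ∑ q : Fin m → G × G,
        V.ρ ((List.ofFn fun i => (q i).1 * (q i).2 * (q i).1⁻¹ * (q i).2⁻¹).prod)
      = (∑ x : G × G, V.ρ (x.1 * x.2 * x.1⁻¹ * x.2⁻¹)) ^ m := by
  induction m with
  | zero =>
      simp
  | succ m ih =>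
      rw [← (Fin.consEquiv (fun _ : Fin (m+1) => G × G)).sum_comp]
      rw [Fintype.sum_prod_type]
      have key : ∀ (x : G × G) (q : Fin m → G × G),
          V.ρ ((List.ofFn fun i =>
              (Fin.consEquiv (fun _ : Fin (m+1) => G × G) (x, q) i).1 *
              (Fin.consEquiv (fun _ : Fin (m+1) => G × G) (x, q) i).2 *
              (Fin.consEquiv (fun _ : Fin (m+1) => G × G) (x, q) i).1⁻¹ *
              (Fin.consEquiv (fun _ : Fin (m+1) => G × G) (x, q) i).2⁻¹).prod)
            = V.ρ (x.1 * x.2 * x.1⁻¹ * x.2⁻¹) *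
              V.ρ ((List.ofFn fun i => (q i).1 * (q i).2 * (q i).1⁻¹ * (q i).2⁻¹).prod) := by
        intro x q
        rw [← map_mul]
        congr 1
        rw [List.ofFn_succ, List.prod_cons]
        simp [Fin.consEquiv]
      rw [Finset.sum_congr rfl fun x _ => Finset.sum_congr rfl fun q _ => key x q]
      rw [← Finset.sum_mul_sum, ih, pow_succ']

omit [Fintype G] in
/-- A finite-dimensional representation with no nontrivial invariant subspaces is simple. -/
lemma mednykh_simple_of_invariants (X : FDRep ℂ G) [Nontrivial X]
    (h : ∀ p : Submodule ℂ X, (∀ (g : G) v, v ∈ p → X.ρ g v ∈ p) → p = ⊥ ∨ p = ⊤) :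
    Simple X := by
  constructor
  intro Y f hm
  constructor
  · intro hiso hzero
    have hid : 𝟙 X = 0 := by
      calc 𝟙 X = inv f ≫ f := (IsIso.inv_hom_id f).symm
      _ = inv f ≫ 0 := congrArg (fun t => inv f ≫ t) hzero
      _ = 0 := Limits.comp_zero
    obtain ⟨v, w, hvw⟩ := exists_pair_ne X
    apply hvw
    have hv : v = 0 := by simpa using congrArg (fun (φ : X ⟶ X) => (Action.Hom.hom φ).hom.hom v) hid
    have hw : w = 0 := by simpa using congrArg (fun (φ : X ⟶ X) => (Action.Hom.hom φ).hom.hom w) hid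
    rw [hv, hw]
  · intro hf
    have hcomm : ∀ (g : G) (v : ↑Y.V), f.hom.hom.hom ((Y.ρ g) v) = (X.ρ g) (f.hom.hom.hom v) :=
      fun g v => by simpa using LinearMap.congr_fun (congrArg (fun φ => φ.hom.hom) (f.comm g)) v
    have hker : LinearMap.ker f.hom.hom.hom = ⊥ := by
      by_contra hk
      have hinv : ∀ (g : G) v, v ∈ LinearMap.ker f.hom.hom.hom → Y.ρ g v ∈ LinearMap.ker f.hom.hom.hom := by
        intro g v hv
        rw [LinearMap.mem_ker] at hv ⊢
        exact (hcomm g v).trans (by rw [hv, map_zero])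
      set pk := LinearMap.ker f.hom.hom.hom with hpk
      let σ : Representation ℂ G ↥pk :=
        { toFun := fun g => (Y.ρ g).restrict (fun v hv => hinv g v hv)
          map_one' := by
            apply LinearMap.ext; intro v; apply Subtype.ext
            simp [LinearMap.restrict_apply]
          map_mul' := by
            intro g g'; apply LinearMap.ext; intro v; apply Subtype.ext
            simp [LinearMap.restrict_apply] }
      let i : FDRep.of σ ⟶ Y := ⟨FGModuleCat.ofHom pk.subtype, fun g => by
        ext v; rfl⟩
      have hi0 : i = 0 := by
        rw [← cancel_mono f, Limits.zero_comp]
        ext v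
        rcases v with ⟨v, hv⟩
        exact LinearMap.mem_ker.mp hv
      obtain ⟨v, hv, hvne⟩ := (Submodule.ne_bot_iff pk).mp hk
      apply hvne
      have := congrArg (fun (φ : FDRep.of σ ⟶ Y) => (Action.Hom.hom φ).hom.hom ⟨v, hv⟩) hi0
      exact this
    have hinj : Function.Injective f.hom.hom.hom := LinearMap.ker_eq_bot.mp hker
    have hrange : LinearMap.range f.hom.hom.hom = ⊤ := by
      have hinvr : ∀ (g : G) w, w ∈ LinearMap.range f.hom.hom.hom →
          X.ρ g w ∈ LinearMap.range f.hom.hom.hom := by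
        rintro g _ ⟨v, rfl⟩
        exact ⟨Y.ρ g v, hcomm g v⟩
      rcases h (LinearMap.range f.hom.hom.hom) (fun g w hw => hinvr g w hw) with hb | ht
      · exfalso
        apply hf
        ext v
        have hmem : f.hom.hom.hom v ∈ LinearMap.range f.hom.hom.hom := ⟨v, rfl⟩
        rw [hb, Submodule.mem_bot] at hmem
        simpa using hmem
      · exact ht
    have hsurj : Function.Surjective f.hom.hom.hom := LinearMap.range_eq_top.mp hrange
    let e := LinearEquiv.ofBijective f.hom.hom.hom ⟨hinj, hsurj⟩
    have h1 : ∀ w, f.hom.hom.hom (e.symm w) = w := fun w => e.apply_symm_apply w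
    let ginv : X ⟶ Y := ⟨FGModuleCat.ofHom e.symm.toLinearMap, fun g => by
      ext x
      apply hinj
      show f.hom.hom.hom (e.symm ((X.ρ g) x)) = f.hom.hom.hom ((Y.ρ g) (e.symm x))
      rw [h1, hcomm g (e.symm x), h1]⟩
    refine ⟨ginv, ?_, ?_⟩
    · ext v
      show e.symm (f.hom.hom.hom v) = _
      exact e.symm_apply_apply v
    · ext x
      show f.hom.hom.hom (e.symm x) = _
      exact h1 x

section Delta

open scoped Classical

variable (ι : Type) [Fintype ι] (lam : ι → FDRep ℂ G)

/-- The defect function measuring failure of the second orthogonality relation. -/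
noncomputable def mednykhFdef (x : G) : ℂ :=
  (if x = 1 then (Fintype.card G : ℂ) else 0)
    - ∑ i, (Module.finrank ℂ (lam i) : ℂ) * (lam i).character x⁻¹

lemma mednykhFdef_class (h x : G) : mednykhFdef ι lam (h * x * h⁻¹) = mednykhFdef ι lam x := by
  unfold mednykhFdef
  have h1 : (h * x * h⁻¹ = 1) ↔ (x = 1) := by
    constructor
    · intro hh
      have := congrArg (fun y => h⁻¹ * y * h) hh
      simpa [mul_assoc] using this
    · intro hh; rw [hh]; group
  have h2 : ∀ i : ι, (lam i).character (h * x * h⁻¹)⁻¹ = (lam i).character x⁻¹ := by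
    intro i
    have : (h * x * h⁻¹)⁻¹ = h * x⁻¹ * h⁻¹ := by group
    rw [this, (lam i).char_conj]
  simp only [h1]
  rw [Finset.sum_congr rfl fun i _ => by rw [h2 i]]

lemma mednykhFdef_ortho
    (hirr : ∀ i, Simple (lam i))
    (hdist : ∀ i j, i ≠ j → ¬ Nonempty (lam i ≅ lam j)) (j : ι) :
    ∑ x : G, mednykhFdef ι lam x * (lam j).character x = 0 := by
  haveI := hirr j
  unfold mednykhFdef
  simp only [sub_mul, Finset.sum_sub_distrib, ite_mul, zero_mul]
  have e1 : ∑ x : G, (if x = 1 then (Fintype.card G : ℂ) * (lam j).character x else 0)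
      = (Fintype.card G : ℂ) * (lam j).character 1 := by
    rw [Finset.sum_ite_eq' Finset.univ (1 : G)
      (fun x => (Fintype.card G : ℂ) * (lam j).character x)]
    simp
  have e2 : ∀ x : G, (∑ i, (Module.finrank ℂ (lam i) : ℂ) * (lam i).character x⁻¹)
        * (lam j).character x
      = ∑ i, (Module.finrank ℂ (lam i) : ℂ)
          * ((lam i).character x⁻¹ * (lam j).character x) := by
    intro x
    rw [Finset.sum_mul]
    exact Finset.sum_congr rfl fun i _ => by ring
  rw [e1, Finset.sum_congr rfl fun x _ => e2 x, Finset.sum_comm]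
  have e3 : ∀ i : ι, ∑ x : G, (Module.finrank ℂ (lam i) : ℂ)
        * ((lam i).character x⁻¹ * (lam j).character x)
      = (Module.finrank ℂ (lam i) : ℂ)
          * ∑ x : G, (lam i).character x * (lam j).character x⁻¹ := by
    intro i
    rw [← Finset.mul_sum]
    congr 1
    refine Fintype.sum_bijective (fun x => x⁻¹) (Equiv.inv G).bijective _ _ fun x => ?_
    rw [inv_inv]
  rw [Finset.sum_congr rfl fun i _ => e3 i]
  have e4 : ∀ i : ι, (Module.finrank ℂ (lam i) : ℂ)
        * ∑ x : G, (lam i).character x * (lam j).character x⁻¹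
      = if i = j then (Module.finrank ℂ (lam i) : ℂ) * (Fintype.card G : ℂ) else 0 := by
    intro i
    haveI := hirr i
    rw [mednykh_charOrtho (lam i) (lam j)]
    by_cases hij : i = j
    · subst hij
      rw [if_pos ⟨Iso.refl _⟩, if_pos rfl]
    · rw [if_neg (hdist i j hij), if_neg hij, mul_zero]
  rw [Finset.sum_congr rfl fun i _ => e4 i, Finset.sum_ite_eq' Finset.univ j
    (fun i => (Module.finrank ℂ (lam i) : ℂ) * (Fintype.card G : ℂ))]
  simp [FDRep.char_one]
  ring

/-- Second orthogonality at the identity: completeness of irreducible characters. -/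
theorem mednykh_delta_expansion
    (hirr : ∀ i, Simple (lam i))
    (hdist : ∀ i j, i ≠ j → ¬ Nonempty (lam i ≅ lam j))
    (hcomplete : ∀ V : FDRep ℂ G, Simple V → ∃ i, Nonempty (V ≅ lam i)) :
    ∀ x : G, ∑ i, (Module.finrank ℂ (lam i) : ℂ) * (lam i).character x
      = if x = 1 then (Fintype.card G : ℂ) else 0 := by
  letI : NeZero ((Fintype.card G : ℂ)) := ⟨Nat.cast_ne_zero.mpr Fintype.card_ne_zero⟩
  set f : G → ℂ := mednykhFdef ι lam with hf
  set z : MonoidAlgebra ℂ G := ∑ x : G, f x • MonoidAlgebra.single x 1 with hz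
  have zg : ∀ h : G, (MonoidAlgebra.single h (1:ℂ)) * z = z * MonoidAlgebra.single h 1 := by
    intro h
    rw [hz, Finset.mul_sum, Finset.sum_mul]
    refine Fintype.sum_bijective (fun x => h * x * h⁻¹)
      (((Equiv.mulLeft h).trans (Equiv.mulRight h⁻¹)).bijective) _ _ fun x => ?_
    rw [mul_smul_comm, smul_mul_assoc, MonoidAlgebra.single_mul_single,
      MonoidAlgebra.single_mul_single, hf, mednykhFdef_class]
    congr 2
    group
  have z_comm : ∀ a : MonoidAlgebra ℂ G, a * z = z * a := by
    intro a
    refine MonoidAlgebra.induction_on (motive := fun a => a * z = z * a) a (fun g => zg g) ?_ ?_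
    · intro a b ha hb
      rw [add_mul, mul_add, ha, hb]
    · intro r a ha
      rw [smul_mul_assoc, mul_smul_comm, ha]
  let K : Submodule (MonoidAlgebra ℂ G) (MonoidAlgebra ℂ G) :=
    { carrier := {m | z * m = 0}
      add_mem' := fun {a} {b} ha hb => by
        simp only [Set.mem_setOf_eq] at *
        rw [mul_add, ha, hb, add_zero]
      zero_mem' := by simp only [Set.mem_setOf_eq, mul_zero]
      smul_mem' := fun c x hx => by
        simp only [Set.mem_setOf_eq] at *
        rw [smul_eq_mul, ← mul_assoc, ← z_comm c, mul_assoc, hx, mul_zero] }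
  have key : ∀ N : Submodule (MonoidAlgebra ℂ G) (MonoidAlgebra ℂ G),
      IsSimpleModule (MonoidAlgebra ℂ G) ↥N → N ≤ K := by
    intro N hNs
    haveI := hNs
    haveI : Nontrivial ↥N := IsSimpleModule.nontrivial (MonoidAlgebra ℂ G) ↥N
    haveI : FiniteDimensional ℂ (MonoidAlgebra ℂ G) :=
      inferInstance
    haveI : FiniteDimensional ℂ ↥N :=
      inferInstanceAs (FiniteDimensional ℂ ↥(N.restrictScalars ℂ))
    let ρN : Representation ℂ G ↥N :=
      { toFun := fun g =>
          { toFun := fun m => ⟨MonoidAlgebra.single g (1:ℂ) * ↑m, by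
              simpa [smul_eq_mul] using N.smul_mem (MonoidAlgebra.single g (1:ℂ)) m.2⟩
            map_add' := fun m m' => by
              apply Subtype.ext
              simp [mul_add]
            map_smul' := fun c m => by
              apply Subtype.ext
              simp [mul_smul_comm] }
        map_one' := by
          apply LinearMap.ext; intro m; apply Subtype.ext
          simp [← MonoidAlgebra.one_def]
        map_mul' := fun g g' => by
          apply LinearMap.ext; intro m; apply Subtype.ext
          show MonoidAlgebra.single (g * g') (1:ℂ) * ↑m
            = MonoidAlgebra.single g (1:ℂ) * (MonoidAlgebra.single g' (1:ℂ) * ↑m)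
          rw [← mul_assoc, MonoidAlgebra.single_mul_single, one_mul] }
    let VN : FDRep ℂ G := FDRep.of ρN
    haveI : Nontrivial VN := inferInstanceAs (Nontrivial ↥N)
    haveI hsimp : Simple VN := by
      apply mednykh_simple_of_invariants VN
      intro p hp
      let q : Submodule (MonoidAlgebra ℂ G) ↥N :=
        { carrier := {v : ↥N | v ∈ p}
          add_mem' := fun {a} {b} ha hb => p.add_mem ha hb
          zero_mem' := p.zero_mem
          smul_mem' := by
            intro c v hv
            show c • v ∈ p
            refine Finsupp.induction_linear (motive := fun c => MonoidAlgebra.ofCoeff c • v ∈ p) c.coeff ?_ ?_ ?_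
            · show (0 : MonoidAlgebra ℂ G) • v ∈ p
              rw [zero_smul]; exact p.zero_mem
            · intro a b ha hb
              have hab : MonoidAlgebra.ofCoeff (a + b) • v
                  = MonoidAlgebra.ofCoeff a • v + MonoidAlgebra.ofCoeff b • v :=
                add_smul (R := MonoidAlgebra ℂ G) _ _ v
              rw [hab]
              exact p.add_mem ha hb
            · intro g c
              show (MonoidAlgebra.single g c) • v ∈ p
              have hs : (MonoidAlgebra.single g c : MonoidAlgebra ℂ G)
                  = c • MonoidAlgebra.single g (1:ℂ) := by
                rw [MonoidAlgebra.smul_single', mul_one]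
              rw [hs, smul_assoc]
              refine p.smul_mem c ?_
              have : (MonoidAlgebra.single g (1:ℂ)) • v = ρN g v := Subtype.ext rfl
              rw [this]
              exact hp g v hv }
      rcases eq_bot_or_eq_top q with hq | hq
      · left
        ext w
        constructor
        · intro hw
          have : w ∈ q := hw
          rw [hq] at this
          simpa using this
        · intro hw
          simp only [Submodule.mem_bot] at hw
          rw [hw]; exact p.zero_mem
      · right
        ext w
        simp only [Submodule.mem_top, iff_true]
        have : w ∈ q := by rw [hq]; trivial
        exact this
    obtain ⟨j, ⟨iso⟩⟩ := hcomplete VN hsimp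
    have hch : VN.character = (lam j).character := FDRep.char_iso iso
    let L : ↥N →ₗ[ℂ] ↥N :=
      { toFun := fun m => ⟨z * ↑m, by simpa [smul_eq_mul] using N.smul_mem z m.2⟩
        map_add' := fun m m' => by apply Subtype.ext; simp [mul_add]
        map_smul' := fun c m => by apply Subtype.ext; simp [mul_smul_comm] }
    have hLcomm : ∀ g : G, L * ρN g = ρN g * L := by
      intro g
      apply LinearMap.ext; intro m; apply Subtype.ext
      show z * (MonoidAlgebra.single g (1:ℂ) * ↑m)
        = MonoidAlgebra.single g (1:ℂ) * (z * ↑m)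
      rw [← mul_assoc, ← z_comm (MonoidAlgebra.single g (1:ℂ)), mul_assoc]
    have hLrep : L = ∑ x : G, f x • (ρN x : ↥N →ₗ[ℂ] ↥N) := by
      apply LinearMap.ext; intro m; apply Subtype.ext
      show z * ↑m = _
      rw [hz, Finset.sum_mul]
      have hterm : ∀ x : G, (f x • MonoidAlgebra.single x (1:ℂ)) * ↑m
          = f x • (MonoidAlgebra.single x (1:ℂ) * ↑m) := fun x => smul_mul_assoc _ _ _
      rw [Finset.sum_congr rfl fun x _ => hterm x]
      have hcoe : ((∑ x : G, f x • (ρN x : ↥N →ₗ[ℂ] ↥N)) m : MonoidAlgebra ℂ G)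
          = ∑ x : G, f x • ((ρN x m : ↥N) : MonoidAlgebra ℂ G) := by
        rw [LinearMap.sum_apply, AddSubmonoidClass.coe_finset_sum]
        exact Finset.sum_congr rfl fun x _ => by simp
      rw [hcoe]
      exact Finset.sum_congr rfl fun x _ => rfl
    have htrace : LinearMap.trace ℂ ↥N L = ∑ x : G, f x * VN.character x := by
      rw [hLrep, map_sum]
      exact Finset.sum_congr rfl fun x _ => by rw [map_smul]; rfl
    have htr0 : LinearMap.trace ℂ ↥N L = 0 := by
      rw [htrace, hch, hf]
      exact mednykhFdef_ortho ι lam hirr hdist j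
    have hL := mednykh_schur_scalar VN L hLcomm
    rw [show LinearMap.trace ℂ ↥VN L = LinearMap.trace ℂ ↥N L from rfl, htr0, zero_div,
      zero_smul] at hL
    intro m hm
    have h0 := LinearMap.congr_fun hL ⟨m, hm⟩
    have h1 : ((L ⟨m, hm⟩ : ↥N) : MonoidAlgebra ℂ G) = 0 := by rw [h0]; rfl
    exact h1
  haveI : IsSemisimpleModule (MonoidAlgebra ℂ G) (MonoidAlgebra ℂ G) := inferInstance
  have htop : (⊤ : Submodule (MonoidAlgebra ℂ G) (MonoidAlgebra ℂ G)) ≤ K := by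
    rw [← IsSemisimpleModule.sSup_simples_eq_top (MonoidAlgebra ℂ G) (MonoidAlgebra ℂ G)]
    exact sSup_le fun N hN => key N hN
  have hz0 : z = 0 := by
    have h1 : (1 : MonoidAlgebra ℂ G) ∈ K := htop Submodule.mem_top
    have : z * 1 = 0 := h1
    rwa [mul_one] at this
  have hf0 : ∀ x : G, f x = 0 := by
    intro x
    have hzx : z.coeff x = f x := by
      rw [hz]
      rw [MonoidAlgebra.coeff_sum, Finsupp.finset_sum_apply]
      have : ∀ y : G, (f y • MonoidAlgebra.single y (1:ℂ)).coeff x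
          = if y = x then f y else 0 := by
        intro y
        rw [MonoidAlgebra.coeff_smul, Finsupp.smul_apply, MonoidAlgebra.coeff_single,
          Finsupp.single_apply]
        split <;> simp
      rw [Finset.sum_congr rfl fun y _ => this y, Finset.sum_ite_eq' Finset.univ x f]
      simp
    rw [hz0] at hzx
    simpa using hzx.symm
  intro x
  have hx := hf0 x⁻¹
  rw [hf] at hx
  unfold mednykhFdef at hx
  have h2 := sub_eq_zero.mp hx
  simp only [inv_inv, inv_eq_one] at h2
  exact h2.symm

end Delta

end MednykhAux

/-- **Mednykh.** For a finite group `G` and a closed orientable surface of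
genus `g`, the number of `2g`-tuples `(a₁,b₁,…,a_g,b_g)` satisfying
`a₁b₁a₁⁻¹b₁⁻¹ ⋯ a_g b_g a_g⁻¹ b_g⁻¹ = 1` equals `|G|^(2g-1)` times the sum over
irreducible complex representations `λ` of `(dim λ)^(2-2g)`. -/
theorem mednykh_formula
    (G : Type) [Group G] [Fintype G] (g : ℕ)
    (ι : Type) [Fintype ι] (lam : ι → FDRep ℂ G)
    (hirr : ∀ i, Simple (lam i))
    (hdist : ∀ i j, i ≠ j → ¬ Nonempty (lam i ≅ lam j))
    (hcomplete : ∀ V : FDRep ℂ G, Simple V → ∃ i, Nonempty (V ≅ lam i)) :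
    (Nat.card {p : (Fin g → G) × (Fin g → G) //
        (List.ofFn (fun i => p.1 i * p.2 i * (p.1 i)⁻¹ * (p.2 i)⁻¹)).prod = 1} : ℂ)
      = (Fintype.card G : ℂ) ^ (2 * (g : ℤ) - 1) *
        ∑ i, (Module.finrank ℂ (lam i) : ℂ) ^ (2 - 2 * (g : ℤ)) := by
  classical
  set n : ℂ := (Fintype.card G : ℂ) with hn
  have hn0 : n ≠ 0 := Nat.cast_ne_zero.mpr Fintype.card_ne_zero
  have hd0 : ∀ i, (Module.finrank ℂ (lam i) : ℂ) ≠ 0 := fun i => by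
    haveI := hirr i
    exact mednykh_finrank_ne_zero (lam i)
  -- Step A : express the cardinality as a sum of indicators over all tuples
  have hcount : (Nat.card {p : (Fin g → G) × (Fin g → G) //
        (List.ofFn (fun i => p.1 i * p.2 i * (p.1 i)⁻¹ * (p.2 i)⁻¹)).prod = 1} : ℂ)
      = ∑ p : (Fin g → G) × (Fin g → G),
          (if (List.ofFn (fun i => p.1 i * p.2 i * (p.1 i)⁻¹ * (p.2 i)⁻¹)).prod = 1
            then (1:ℂ) else 0) := by
    rw [Nat.card_eq_fintype_card, Fintype.card_subtype]
    rw [Finset.card_filter]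
    push_cast
    exact Finset.sum_congr rfl fun p _ => by split <;> simp
  -- Step B : reindex over functions into pairs
  have hreindex : ∑ p : (Fin g → G) × (Fin g → G),
        (if (List.ofFn (fun i => p.1 i * p.2 i * (p.1 i)⁻¹ * (p.2 i)⁻¹)).prod = 1
          then (1:ℂ) else 0)
      = ∑ q : Fin g → G × G,
          (if (List.ofFn (fun i => (q i).1 * (q i).2 * (q i).1⁻¹ * (q i).2⁻¹)).prod = 1
            then (1:ℂ) else 0) := by
    rw [← Equiv.sum_comp (Equiv.arrowProdEquivProdArrow (Fin g) (fun _ => G) (fun _ => G))]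
    rfl
  -- Step C : expand the indicator using the completeness of characters
  have hdelta : ∀ x : G, (if x = 1 then (1:ℂ) else 0)
      = n⁻¹ * ∑ i, (Module.finrank ℂ (lam i) : ℂ) * (lam i).character x := by
    intro x
    rw [mednykh_delta_expansion ι lam hirr hdist hcomplete x]
    split
    · rw [inv_mul_cancel₀ hn0]
    · rw [mul_zero]
  rw [hcount, hreindex]
  rw [Finset.sum_congr rfl fun q _ => hdelta _]
  rw [← Finset.mul_sum, Finset.sum_comm]
  -- Step D : compute the inner sums via Schur
  have hinner : ∀ i : ι, ∑ q : Fin g → G × G, (Module.finrank ℂ (lam i) : ℂ) *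
        (lam i).character ((List.ofFn
          (fun k => (q k).1 * (q k).2 * (q k).1⁻¹ * (q k).2⁻¹)).prod)
      = (Module.finrank ℂ (lam i) : ℂ) * (((n / (Module.finrank ℂ (lam i) : ℂ)) ^ 2) ^ g
          * (Module.finrank ℂ (lam i) : ℂ)) := by
    intro i
    haveI := hirr i
    rw [← Finset.mul_sum]
    congr 1
    have hchar : ∀ q : Fin g → G × G, (lam i).character ((List.ofFn
          (fun k => (q k).1 * (q k).2 * (q k).1⁻¹ * (q k).2⁻¹)).prod)
        = LinearMap.trace ℂ (lam i) ((lam i).ρ ((List.ofFn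
          (fun k => (q k).1 * (q k).2 * (q k).1⁻¹ * (q k).2⁻¹)).prod)) := fun q => rfl
    rw [Finset.sum_congr rfl fun q _ => hchar q, ← map_sum,
      mednykh_sum_word (lam i) g, mednykh_comm_sum (lam i), smul_pow, map_smul]
    have hidpow : (LinearMap.id : lam i →ₗ[ℂ] lam i) ^ g = LinearMap.id := by
      rw [← Module.End.one_eq_id, one_pow]
    rw [hidpow]
    simp [LinearMap.trace_id, hn]
  rw [Finset.sum_congr rfl fun i _ => hinner i]
  -- Step E : final algebraic manipulation
  rw [Finset.mul_sum, Finset.mul_sum]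
  refine Finset.sum_congr rfl fun i _ => ?_
  set d : ℂ := (Module.finrank ℂ (lam i) : ℂ) with hdd
  have hd : d ≠ 0 := hd0 i
  have hz1 : n ^ (2 * (g : ℤ) - 1) = n ^ (2 * g) * n⁻¹ := by
    rw [show (2 * (g : ℤ) - 1) = ((2 * g : ℕ) : ℤ) - 1 by push_cast; ring,
      zpow_sub₀ hn0, zpow_natCast, zpow_one, div_eq_mul_inv]
  have hz2 : d ^ (2 - 2 * (g : ℤ)) = d ^ 2 * (d ^ (2 * g))⁻¹ := by
    rw [show (2 - 2 * (g : ℤ)) = ((2 : ℕ) : ℤ) - ((2 * g : ℕ) : ℤ) by push_cast; ring,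
      zpow_sub₀ hd, zpow_natCast, zpow_natCast, div_eq_mul_inv]
  rw [hz1, hz2]
  have hpow : ((n / d) ^ 2) ^ g = n ^ (2 * g) / d ^ (2 * g) := by
    rw [← pow_mul, div_pow]
  rw [hpow]
  field_simp
end

section
/- For the matrix algebra A = M(n,ℂ) with normalized trace ⟨X⟩ = (1/n)tr(X) and orthonormal basis {√n e_ij} of elementary matrices, the surface invariant A_{g,f}^{or} = Σ ⟨e_{i₁}e_{j₁}e_{i₁}*e_{j₁}* ⋯ e_{i_g}e_{j_g}e_{i_g}*e_{j_g}* · e_{h₁}e_{h₁}* ⋯ e_{h_{f-1}}e_{h_{f-1}}*⟩ (sum over basis indices, using the orthonormal basis elements √n e_ij) equals n^{2g + 2(f-1)} · 1 = n^{2g+2f-2}. -/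
/-!
The matrix units satisfy `∑ i j, e_ij A e_ji = tr(A) • 1`. For `E_p = c • e_p` this makes both the
tadpole sum `∑ p, E_p E_p*` and the commutator sum `∑ p q, E_p E_q E_p* E_q*` scalar, equal to
`n |c|² • 1` and `|c|⁴ • 1`, that is `n² • 1` for `c = √n`. Since the factors of the product carry
independent summation indices, the sum over all indices factors into
`(n² • 1)^g (n² • 1)^(f-1)`, whose normalized trace is `n^(2g + 2(f-1))`.
-/

open Matrix

theorem Fintype.sum_list_prod_ofFn_eq_sum_pow {R ι : Type*} [Semiring R] [Fintype ι] (M : ι → R) :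
    ∀ m : ℕ, ∑ c : Fin m → ι, (List.ofFn fun i => M (c i)).prod = (∑ i, M i) ^ m
  | 0 => by simp
  | m + 1 => by
      rw [pow_succ', ← (Fin.consEquiv fun _ => ι).sum_comp, Fintype.sum_prod_type,
        ← Fintype.sum_list_prod_ofFn_eq_sum_pow M m, Finset.sum_mul_sum]
      simp [List.ofFn_succ, Fin.consEquiv]

theorem Fintype.sum_sum_list_prod_ofFn_eq_sum_pow {R ι κ : Type*} [Semiring R] [Fintype ι]
    [Fintype κ] (M : ι → κ → R) (m : ℕ) :
    ∑ x : Fin m → ι, ∑ y : Fin m → κ, (List.ofFn fun i => M (x i) (y i)).prod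
      = (∑ p, ∑ q, M p q) ^ m := by
  rw [← Fintype.sum_prod_type', ← (Equiv.arrowProdEquivProdArrow _ _ _).sum_comp,
    ← Fintype.sum_prod_type', ← Fintype.sum_list_prod_ofFn_eq_sum_pow]
  rfl

namespace Matrix

variable {n R : Type*} [DecidableEq n] [CommSemiring R]

section
variable [Fintype n]

theorem sum_single_mul_mul_single (A : Matrix n n R) :
    ∑ i, ∑ j, single i j (1 : R) * A * single j i 1 = A.trace • 1 := by
  have h (i j : n) : single i j (1 : R) * A * single j i 1 = A j j • single i i 1 := by
    rw [single_mul_mul_single, smul_single, smul_eq_mul, one_mul, mul_one]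
  simp only [h, ← Finset.sum_smul, ← Finset.smul_sum, ← sum_single_one]
  rfl

theorem sum_trace_single_smul_single :
    ∑ i : n, ∑ j : n, (single i j (1 : R)).trace • single j i (1 : R) = 1 := by
  rw [← sum_single_one]
  refine Finset.sum_congr rfl fun i _ => ?_
  rw [Finset.sum_eq_single i (fun j _ hj => by rw [trace_single_eq_of_ne _ _ _ hj.symm, zero_smul])
    (by simp), trace_single_eq_same, one_smul]

end

variable [StarRing R] {c : R} {E : n × n → Matrix n n R}

theorem conjTranspose_eq_smul_single (hE : ∀ p, E p = c • single p.1 p.2 1) (p : n × n) :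
    (E p)ᴴ = star c • single p.2 p.1 1 := by
  rw [hE, conjTranspose_smul, conjTranspose_single, star_one]

variable [Fintype n]

theorem sum_mul_mul_conjTranspose (hE : ∀ p, E p = c • single p.1 p.2 1) (A : Matrix n n R) :
    ∑ p, E p * A * (E p)ᴴ = (c * star c * A.trace) • 1 := by
  have h (i j : n) :
      E (i, j) * A * (E (i, j))ᴴ = (c * star c) • (single i j 1 * A * single j i 1) := by
    rw [conjTranspose_eq_smul_single hE, hE, Matrix.smul_mul, Matrix.mul_smul, Matrix.smul_mul,
      smul_smul, mul_comm (star c)]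
  simp only [Fintype.sum_prod_type, h, ← Finset.smul_sum, sum_single_mul_mul_single, smul_smul]

theorem sum_mul_conjTranspose (hE : ∀ p, E p = c • single p.1 p.2 1) :
    ∑ p, E p * (E p)ᴴ = (c * star c * Fintype.card n) • 1 := by
  simpa using sum_mul_mul_conjTranspose hE 1

theorem sum_sum_mul_mul_conjTranspose_mul_conjTranspose (hE : ∀ p, E p = c • single p.1 p.2 1) :
    ∑ p, ∑ q, E p * E q * (E p)ᴴ * (E q)ᴴ = (c * star c) ^ 2 • 1 := by
  have h (i j : n) : (c * star c * (E (i, j)).trace) • (E (i, j))ᴴ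
      = (c * star c) ^ 2 • ((single i j (1 : R)).trace • single j i 1) := by
    rw [conjTranspose_eq_smul_single hE, hE, trace_smul, smul_eq_mul, smul_smul, smul_smul]
    ring_nf
  rw [Finset.sum_comm]
  simp only [← Finset.sum_mul, sum_mul_mul_conjTranspose hE, smul_mul, one_mul]
  simp only [Fintype.sum_prod_type, h, ← Finset.smul_sum, sum_trace_single_smul_single]

end Matrix

/-- For `A = M(n,ℂ)` with normalized trace `τ(X) = (1/n) tr X` and
orthonormal basis `√n e_{ij}` of (scaled) elementary matrices, the surface invariant
`A_{g,f}^{or}` — the sum over all basis indices of the trace of the product of `g`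
"commutator" factors `E E' E* E'*` and `f−1` "tadpole" factors `E E*` — equals
`n^{2g+2f-2}`. -/
theorem matrix_surface_invariant
    (n g f : ℕ) (hn : 0 < n) (hf : 1 ≤ f)
    (E : Fin n × Fin n → Matrix (Fin n) (Fin n) ℂ)
    (hE : ∀ p, E p = (Real.sqrt n : ℂ) • Matrix.single p.1 p.2 1)
    (τ : Matrix (Fin n) (Fin n) ℂ → ℂ)
    (hτ : ∀ X, τ X = (1 / (n : ℂ)) * Matrix.trace X) :
    ∑ x : Fin g → Fin n × Fin n, ∑ y : Fin g → Fin n × Fin n,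
      ∑ h : Fin (f - 1) → Fin n × Fin n,
        τ ((List.ofFn fun i => E (x i) * E (y i) * (E (x i))ᴴ * (E (y i))ᴴ).prod *
           (List.ofFn fun k => E (h k) * (E (h k))ᴴ).prod)
      = (n : ℂ) ^ (2 * g + 2 * f - 2) := by
  have hc : (Real.sqrt n : ℂ) * star (Real.sqrt n : ℂ) = n := by
    rw [Complex.star_def, Complex.conj_ofReal, ← Complex.ofReal_mul,
      Real.mul_self_sqrt n.cast_nonneg, Complex.ofReal_natCast]
  have hcomm := sum_sum_mul_mul_conjTranspose_mul_conjTranspose hE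
  have htadpole := sum_mul_conjTranspose hE
  rw [hc] at hcomm htadpole
  calc _ = τ ((∑ x : Fin g → Fin n × Fin n, ∑ y : Fin g → Fin n × Fin n,
          (List.ofFn fun i => E (x i) * E (y i) * (E (x i))ᴴ * (E (y i))ᴴ).prod) *
        ∑ h : Fin (f - 1) → Fin n × Fin n, (List.ofFn fun k => E (h k) * (E (h k))ᴴ).prod) := by
        simp only [hτ, Finset.sum_mul, trace_sum]
        simp only [Finset.mul_sum, trace_sum]
    _ = τ (((n : ℂ) ^ 2) ^ g • 1 * ((n : ℂ) ^ 2) ^ (f - 1) • 1) := by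
        rw [Fintype.sum_sum_list_prod_ofFn_eq_sum_pow (fun p q => E p * E q * (E p)ᴴ * (E q)ᴴ),
          Fintype.sum_list_prod_ofFn_eq_sum_pow (fun p => E p * (E p)ᴴ), hcomm, htadpole,
          Fintype.card_fin, smul_pow, smul_pow, one_pow, one_pow, sq]
    _ = (n : ℂ) ^ (2 * g + 2 * f - 2) := by
        rw [show 2 * g + 2 * f - 2 = 2 * g + 2 * (f - 1) by omega, hτ, smul_mul_smul_comm,
          one_mul, trace_smul, trace_one, Fintype.card_fin]
        have hn' : (n : ℂ) ≠ 0 := Nat.cast_ne_zero.mpr hn.ne'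
        field_simp
        ring
end
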